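/- arXiv:2401.14737 — 3 statements merged into one kernel-verified Lean document; each statement's English description precedes it below -/
import Mathlib

section
/- Let A₁ be a deterministic strong reset Parikh automaton and B a Büchi automaton. If the intersection SR_ω(A₁) ∩ L_ω(B) is non-empty, then it contains an ultimately periodic word uv^ω. -/
/-! Common definitions: semi-linear sets, Parikh automata on finite and infinite words. -/

/-- The linear set with base vector `b` and finite set `P` of period vectors. -/
def LinSet {d : ℕ} {M : Type} [AddCommMonoid M] (b : Fin d → M)
    (P : Finset (Fin d → M)) : Set (Fin d → M) :=
  {v | ∃ z : (Fin d → M) → ℕ, v = b + ∑ p ∈ P, z p • p}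

/-- A set is semi-linear if it is a finite union of linear sets. -/
def SemiLin {d : ℕ} {M : Type} [AddCommMonoid M] (S : Set (Fin d → M)) : Prop :=
  ∃ (n : ℕ) (b : Fin n → Fin d → M) (P : Fin n → Finset (Fin d → M)),
    S = ⋃ i, LinSet (b i) (P i)

/-- The length-`n` prefix of an infinite word. -/
def pref {S : Type} (α : ℕ → S) (n : ℕ) : List S := List.ofFn fun i : Fin n => α i.1

/-- An infinite word is ultimately periodic if it has the form `u v^ω`. -/
def UltimatelyPeriodic {S : Type} (α : ℕ → S) : Prop :=
  ∃ n p, 0 < p ∧ ∀ i, n ≤ i → α (i + p) = α i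

/-- The finite infix `α[m+1 : n]` (0-indexed positions `m, …, n-1`). -/
def infixSeg {S : Type} (α : ℕ → S) (m n : ℕ) : List S :=
  List.ofFn fun j : Fin (n - m) => α (m + j.1)

/-- `W^ω`: infinite concatenations of non-empty words from `W`. -/
def omegaPow {S : Type} (W : Set (List S)) : Set (ℕ → S) :=
  {α | ∃ k : ℕ → ℕ, k 0 = 0 ∧ StrictMono k ∧ ∀ i, infixSeg α (k i) (k (i + 1)) ∈ W}

/-- A deterministic Parikh automaton with states `Q`, alphabet `S`, dimension `d`,
and a constraint set `C` of vectors over `M` (`M = ℕ`, or `M = ℕ∞` for limit PA). -/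
structure DetPA (Q S : Type) (d : ℕ) (M : Type) where
  init : Q
  trans : Q → S → (Fin d → ℕ) × Q
  acc : Q → Prop
  C : Set (Fin d → M)

namespace DetPA

variable {Q S M : Type} {d : ℕ}

/-- The run of `A` from state `p` on the infinite word `α`: state after `i` letters. -/
def run (A : DetPA Q S d M) (p : Q) (α : ℕ → S) : ℕ → Q
  | 0 => p
  | i + 1 => (A.trans (A.run p α i) (α i)).2

/-- The state of the unique run of `A` on `α` after `i` letters. -/
def stateAt (A : DetPA Q S d M) (α : ℕ → S) : ℕ → Q := A.run A.init α

/-- The vector of the `i`-th transition of the unique run of `A` on `α`. -/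
def step (A : DetPA Q S d M) (α : ℕ → S) (i : ℕ) : Fin d → ℕ :=
  (A.trans (A.stateAt α i) (α i)).1

/-- Sum of transition vectors of the run of `A` on `α` on positions `m, …, n-1`. -/
def vecSum (A : DetPA Q S d M) (α : ℕ → S) (m n : ℕ) : Fin d → ℕ :=
  ∑ i ∈ Finset.Ico m n, A.step α i

/-- The state reached when reading a finite word from state `p`. -/
def runList (A : DetPA Q S d M) : Q → List S → Q
  | p, [] => p
  | p, a :: w => A.runList (A.trans p a).2 w

/-- The sum of transition vectors collected when reading a finite word from state `p`. -/
def sumList (A : DetPA Q S d M) : Q → List S → (Fin d → ℕ)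
  | _, [] => 0
  | p, a :: w => (A.trans p a).1 + A.sumList (A.trans p a).2 w

/-- Finite-word acceptance: end in an accepting state with vector sum in `C`. -/
def AcceptsWord (A : DetPA Q S d ℕ) (w : List S) : Prop :=
  A.acc (A.runList A.init w) ∧ A.sumList A.init w ∈ A.C

/-- The run visits accepting states infinitely often. -/
def InfAcc (A : DetPA Q S d M) (α : ℕ → S) : Prop :=
  ∀ n, ∃ i, n ≤ i ∧ A.acc (A.stateAt α i)

/-- Reachability condition. -/
def ReachAccept (A : DetPA Q S d ℕ) (α : ℕ → S) : Prop :=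
  ∃ i, 1 ≤ i ∧ A.acc (A.stateAt α i) ∧ A.vecSum α 0 i ∈ A.C

/-- Reachability-regular condition. -/
def ReachRegAccept (A : DetPA Q S d ℕ) (α : ℕ → S) : Prop :=
  A.ReachAccept α ∧ A.InfAcc α

/-- Büchi condition. -/
def BuchiAccept (A : DetPA Q S d ℕ) (α : ℕ → S) : Prop :=
  ∀ n, ∃ i, n ≤ i ∧ 1 ≤ i ∧ A.acc (A.stateAt α i) ∧ A.vecSum α 0 i ∈ A.C

/-- Weak reset condition. -/
def WeakResetAccept (A : DetPA Q S d ℕ) (α : ℕ → S) : Prop :=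
  ∃ k : ℕ → ℕ, k 0 = 0 ∧ StrictMono k ∧
    (∀ i, A.acc (A.stateAt α (k (i + 1)))) ∧
    (∀ i, A.vecSum α (k i) (k (i + 1)) ∈ A.C)

/-- Strong reset condition: accepting states occur infinitely often, and between any
two consecutive accepting positions (and from position `0` to the first one) the
collected vector lies in `C`. -/
def StrongResetAccept (A : DetPA Q S d ℕ) (α : ℕ → S) : Prop :=
  (∀ n, ∃ i, n ≤ i ∧ 1 ≤ i ∧ A.acc (A.stateAt α i)) ∧
  ∀ m n, m < n → (m = 0 ∨ (1 ≤ m ∧ A.acc (A.stateAt α m))) →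
    A.acc (A.stateAt α n) →
    (∀ j, m < j → j < n → ¬ A.acc (A.stateAt α j)) →
    A.vecSum α m n ∈ A.C

/-- The extended Parikh image of the unique run of `A` on `α`: componentwise the
supremum in `ℕ∞` of the partial sums (`∞` iff the component is incremented
infinitely often, else the finite total sum). -/
noncomputable def limImage (A : DetPA Q S d M) (α : ℕ → S) : Fin d → ℕ∞ :=
  fun j => ⨆ n, (A.vecSum α 0 n j : ℕ∞)

/-- Limit condition. -/
def LimitAccept (A : DetPA Q S d ℕ∞) (α : ℕ → S) : Prop :=
  A.InfAcc α ∧ A.limImage α ∈ A.C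

end DetPA

/-- `U` is recognized by a deterministic finite-word Parikh automaton. -/
def DetPARecogFin {S : Type} (U : Set (List S)) : Prop :=
  ∃ (d : ℕ) (Q : Type) (_ : Finite Q) (A : DetPA Q S d ℕ),
    SemiLin A.C ∧ U = {w | A.AcceptsWord w}

/-- `L` is recognized by a deterministic reachability PA. -/
def DetReachRecog {S : Type} (L : Set (ℕ → S)) : Prop :=
  ∃ (d : ℕ) (Q : Type) (_ : Finite Q) (A : DetPA Q S d ℕ),
    SemiLin A.C ∧ L = {α | A.ReachAccept α}

/-- `L` is recognized by a deterministic reachability-regular PA. -/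
def DetReachRegRecog {S : Type} (L : Set (ℕ → S)) : Prop :=
  ∃ (d : ℕ) (Q : Type) (_ : Finite Q) (A : DetPA Q S d ℕ),
    SemiLin A.C ∧ L = {α | A.ReachRegAccept α}

/-- `L` is recognized by a deterministic Büchi PA. -/
def DetBuchiRecog {S : Type} (L : Set (ℕ → S)) : Prop :=
  ∃ (d : ℕ) (Q : Type) (_ : Finite Q) (A : DetPA Q S d ℕ),
    SemiLin A.C ∧ L = {α | A.BuchiAccept α}

/-- `L` is recognized by a deterministic weak reset PA. -/
def DetWeakResetRecog {S : Type} (L : Set (ℕ → S)) : Prop :=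
  ∃ (d : ℕ) (Q : Type) (_ : Finite Q) (A : DetPA Q S d ℕ),
    SemiLin A.C ∧ L = {α | A.WeakResetAccept α}

/-- `L` is recognized by a deterministic strong reset PA. -/
def DetStrongResetRecog {S : Type} (L : Set (ℕ → S)) : Prop :=
  ∃ (d : ℕ) (Q : Type) (_ : Finite Q) (A : DetPA Q S d ℕ),
    SemiLin A.C ∧ L = {α | A.StrongResetAccept α}

/-- `L` is recognized by a deterministic limit PA (constraint set over `ℕ∞`). -/
def DetLimitRecog {S : Type} (L : Set (ℕ → S)) : Prop :=
  ∃ (d : ℕ) (Q : Type) (_ : Finite Q) (A : DetPA Q S d ℕ∞),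
    SemiLin A.C ∧ L = {α | A.LimitAccept α}

/-- A nondeterministic Parikh automaton. -/
structure NPA (Q S : Type) (d : ℕ) where
  init : Q
  trans : Q → S → (Fin d → ℕ) → Q → Prop
  acc : Q → Prop
  C : Set (Fin d → ℕ)

namespace NPA

variable {Q S : Type} {d : ℕ}

/-- `r, v` form a run of `A` on the infinite word `α`. -/
def IsRun (A : NPA Q S d) (α : ℕ → S) (r : ℕ → Q) (v : ℕ → Fin d → ℕ) : Prop :=
  r 0 = A.init ∧ ∀ i, A.trans (r i) (α i) (v i) (r (i + 1))

/-- Partial sums of the vectors of a run over positions `m, …, n-1`. -/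
def partSum (v : ℕ → Fin d → ℕ) (m n : ℕ) : Fin d → ℕ := ∑ i ∈ Finset.Ico m n, v i

/-- Nondeterministic reachability-regular acceptance. -/
def ReachRegAccept (A : NPA Q S d) (α : ℕ → S) : Prop :=
  ∃ r v, A.IsRun α r v ∧ (∃ i, 1 ≤ i ∧ A.acc (r i) ∧ partSum v 0 i ∈ A.C) ∧
    ∀ n, ∃ i, n ≤ i ∧ A.acc (r i)

/-- Nondeterministic strong reset acceptance. -/
def StrongResetAccept (A : NPA Q S d) (α : ℕ → S) : Prop :=
  ∃ r v, A.IsRun α r v ∧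
    (∀ n, ∃ i, n ≤ i ∧ 1 ≤ i ∧ A.acc (r i)) ∧
    ∀ m n, m < n → (m = 0 ∨ (1 ≤ m ∧ A.acc (r m))) → A.acc (r n) →
      (∀ j, m < j → j < n → ¬ A.acc (r j)) → partSum v m n ∈ A.C

/-- Nondeterministic weak reset acceptance. -/
def WeakResetAccept (A : NPA Q S d) (α : ℕ → S) : Prop :=
  ∃ r v, A.IsRun α r v ∧ ∃ k : ℕ → ℕ, k 0 = 0 ∧ StrictMono k ∧
    (∀ i, A.acc (r (k (i + 1)))) ∧ (∀ i, partSum v (k i) (k (i + 1)) ∈ A.C)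

/-- Runs of a nondeterministic PA on a finite word, from state `p` to state `q`
collecting vector sum `v`. -/
def ListRun (A : NPA Q S d) : Q → List S → (Fin d → ℕ) → Q → Prop
  | p, [], v, q => q = p ∧ v = 0
  | p, a :: w, v, q => ∃ u p', A.trans p a u p' ∧ ∃ v', A.ListRun p' w v' q ∧ v = u + v'

/-- Finite-word acceptance for a nondeterministic PA. -/
def AcceptsWord (A : NPA Q S d) (w : List S) : Prop :=
  ∃ v q, A.ListRun A.init w v q ∧ A.acc q ∧ v ∈ A.C

end NPA

/-- `L` is recognized by a (nondeterministic) reachability-regular PA. -/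
def NPAReachRegRecog {S : Type} (L : Set (ℕ → S)) : Prop :=
  ∃ (d : ℕ) (Q : Type) (_ : Finite Q) (A : NPA Q S d),
    SemiLin A.C ∧ L = {α | A.ReachRegAccept α}

/-- `L` is recognized by a (nondeterministic) strong reset PA. -/
def NPAStrongResetRecog {S : Type} (L : Set (ℕ → S)) : Prop :=
  ∃ (d : ℕ) (Q : Type) (_ : Finite Q) (A : NPA Q S d),
    SemiLin A.C ∧ L = {α | A.StrongResetAccept α}

/-- `L` is recognized by a (nondeterministic) weak reset PA. -/
def NPAWeakResetRecog {S : Type} (L : Set (ℕ → S)) : Prop :=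
  ∃ (d : ℕ) (Q : Type) (_ : Finite Q) (A : NPA Q S d),
    SemiLin A.C ∧ L = {α | A.WeakResetAccept α}

/-- A nondeterministic Büchi automaton. -/
structure NBA (Q S : Type) where
  init : Q
  trans : Q → S → Q → Prop
  acc : Q → Prop

/-- Büchi acceptance. -/
def NBA.Accepts {Q S : Type} (B : NBA Q S) (α : ℕ → S) : Prop :=
  ∃ r : ℕ → Q, r 0 = B.init ∧ (∀ i, B.trans (r i) (α i) (r (i + 1))) ∧
    ∀ n, ∃ i, n ≤ i ∧ B.acc (r i)

/-- `L` is ω-regular: recognized by a nondeterministic Büchi automaton. -/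
def OmegaRegular {S : Type} (L : Set (ℕ → S)) : Prop :=
  ∃ (Q : Type) (_ : Finite Q) (B : NBA Q S), L = {α | B.Accepts α}


def phi (m p i : ℕ) : ℕ := if i < m then i else m + (i - m) % p

lemma phi_eq_self {m p i : ℕ} (hi : i < m + p) : phi m p i = i := by
  unfold phi
  split
  · rfl
  · rename_i h
    push_neg at h
    rw [Nat.mod_eq_of_lt (by omega)]
    omega

lemma phi_lt {m p i : ℕ} (hp : 0 < p) : phi m p i < m + p := by
  unfold phi
  split
  · omega
  · have := Nat.mod_lt (i - m) hp
    omega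

lemma phi_ge {m p i : ℕ} (hi : m ≤ i) : m ≤ phi m p i := by
  unfold phi; split <;> omega

lemma phi_add_p {m p i : ℕ} (hi : m ≤ i) : phi m p (i + p) = phi m p i := by
  unfold phi
  rw [if_neg (by omega), if_neg (by omega)]
  have : i + p - m = (i - m) + p := by omega
  rw [this, Nat.add_mod_right]

lemma phi_succ {m p : ℕ} (hp : 0 < p) (i : ℕ) :
    phi m p (i + 1) = phi m p i + 1 ∨ (phi m p i + 1 = m + p ∧ phi m p (i + 1) = m) := by
  unfold phi
  by_cases h1 : i + 1 < m
  · rw [if_pos h1, if_pos (by omega)]; left; rfl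
  · rw [if_neg h1]
    by_cases h2 : i < m
    · rw [if_pos h2]
      have : i + 1 = m := by omega
      left; rw [this, Nat.sub_self, Nat.zero_mod]; omega
    · rw [if_neg h2]
      have key : (i + 1 - m) % p = ((i - m) % p + 1) % p := by
        have : i + 1 - m = (i - m) + 1 := by omega
        rw [this]; conv_lhs => rw [Nat.add_mod]
        conv_rhs => rw [Nat.add_mod, Nat.mod_mod_of_dvd _ (dvd_refl p)]
      by_cases h3 : (i - m) % p + 1 < p
      · left
        rw [key, Nat.mod_eq_of_lt h3]
        omega
      · right
        have h4 : (i - m) % p < p := Nat.mod_lt _ hp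
        have h5 : (i - m) % p + 1 = p := by omega
        constructor
        · omega
        · rw [key, h5, Nat.mod_self]; omega

lemma phi_section {m p i t : ℕ} (hp : 0 < p) (h1 : m + t * p ≤ i) (h2 : i < m + (t + 1) * p) :
    phi m p i = i - t * p := by
  unfold phi
  have e : (t + 1) * p = t * p + p := by ring
  rw [e] at h2
  rw [if_neg (by omega)]
  have : i - m = (i - m - t * p) + t * p := by omega
  rw [this, Nat.add_mul_mod_self_right, Nat.mod_eq_of_lt (by omega)]
  omega

lemma phi_mtp {m p t : ℕ} (hp : 0 < p) : phi m p (m + t * p) = m := by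
  unfold phi
  rw [if_neg (by omega)]
  simp [Nat.add_sub_cancel_left, Nat.mul_mod_right]

lemma stateAt_phi {Q S : Type} {d : ℕ} (A : DetPA Q S d ℕ) (α : ℕ → S) {m p : ℕ}
    (hm : 0 < m) (hp : 0 < p)
    (hst : A.stateAt α (m + p) = A.stateAt α m) :
    ∀ i, A.stateAt (fun j => α (phi m p j)) i = A.stateAt α (phi m p i) := by
  intro i
  induction i with
  | zero =>
    have h0 : phi m p 0 = 0 := phi_eq_self (by omega)
    rw [h0]; rfl
  | succ i ih =>
    have e1 : A.stateAt (fun j => α (phi m p j)) (i + 1)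
        = (A.trans (A.stateAt (fun j => α (phi m p j)) i) (α (phi m p i))).2 := rfl
    have e2 : (A.trans (A.stateAt α (phi m p i)) (α (phi m p i))).2
        = A.stateAt α (phi m p i + 1) := rfl
    rw [e1, ih, e2]
    rcases phi_succ (m := m) hp i with h | ⟨h1, h2⟩
    · rw [h]
    · rw [h1, h2, hst]

lemma step_phi {Q S : Type} {d : ℕ} (A : DetPA Q S d ℕ) (α : ℕ → S) {m p : ℕ}
    (hm : 0 < m) (hp : 0 < p)
    (hst : A.stateAt α (m + p) = A.stateAt α m) (i : ℕ) :
    A.step (fun j => α (phi m p j)) i = A.step α (phi m p i) := by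
  unfold DetPA.step
  rw [stateAt_phi A α hm hp hst]

lemma vecSum_shift {Q S : Type} {d : ℕ} (A : DetPA Q S d ℕ) (α β : ℕ → S) {a b c : ℕ}
    (hc : c ≤ a) (hab : a ≤ b)
    (hstep : ∀ i, a ≤ i → i < b → A.step β i = A.step α (i - c)) :
    A.vecSum β a b = A.vecSum α (a - c) (b - c) := by
  unfold DetPA.vecSum
  have h1 : a - c + c = a := by omega
  have h2 : b - c + c = b := by omega
  conv_lhs => rw [← h1, ← h2, ← Finset.map_add_right_Ico]
  rw [Finset.sum_map]
  apply Finset.sum_congr rfl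
  intro i hi
  simp only [Finset.mem_Ico] at hi
  simp only [addRightEmbedding_apply]
  rw [hstep (i + c) (by omega) (by omega), Nat.add_sub_cancel]

lemma phi_add_mul {m p i t : ℕ} (hi : m ≤ i) : phi m p (i + t * p) = phi m p i := by
  induction t with
  | zero => simp
  | succ t ih =>
    have e : i + (t + 1) * p = (i + t * p) + p := by ring
    rw [e, phi_add_p (by omega), ih]

/-- if the intersection of the language of a deterministic strong reset PA
with the language of a Büchi automaton is non-empty, it contains an ultimately
periodic word. -/
theorem strongReset_inter_buchi_ultimatelyPeriodic {Q₁ Q₂ S : Type}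
    [Finite Q₁] [Finite Q₂] {d : ℕ}
    (A : DetPA Q₁ S d ℕ) (hA : SemiLin A.C) (B : NBA Q₂ S)
    (h : ∃ α, A.StrongResetAccept α ∧ B.Accepts α) :
    ∃ α, (A.StrongResetAccept α ∧ B.Accepts α) ∧ UltimatelyPeriodic α := by
  obtain ⟨α, hSR, hBA⟩ := h
  obtain ⟨r, hr0, hrt, hracc⟩ := hBA
  choose bf hbf1 hbf2 using hracc
  choose af haf1 haf2 haf3 using hSR.1
  let a : ℕ → ℕ := fun t => Nat.rec (af 0) (fun _ x => af (bf (x + 1))) t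
  have ha_succ : ∀ t, a (t + 1) = af (bf (a t + 1)) := fun t => rfl
  have ha_lt : ∀ t, a t < a (t + 1) := by
    intro t; rw [ha_succ]
    have h1 := hbf1 (a t + 1)
    have h2 := haf1 (bf (a t + 1))
    omega
  have ha_mono : StrictMono a := strictMono_nat_of_lt_succ ha_lt
  have ha_pos : ∀ t, 1 ≤ a t := by
    intro t; cases t with
    | zero => exact haf2 0
    | succ t => rw [ha_succ]; exact haf2 _
  have ha_acc : ∀ t, A.acc (A.stateAt α (a t)) := by
    intro t; cases t with
    | zero => exact haf3 0
    | succ t => rw [ha_succ]; exact haf3 _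
  obtain ⟨s, t, hlt, heq⟩ : ∃ s t, s < t ∧
      (A.stateAt α (a s), r (a s)) = (A.stateAt α (a t), r (a t)) := by
    obtain ⟨s, t, hne, heq⟩ :=
      Finite.exists_ne_map_eq_of_infinite (fun t => (A.stateAt α (a t), r (a t)))
    rcases hne.lt_or_gt with h | h
    · exact ⟨s, t, h, heq⟩
    · exact ⟨t, s, h, heq.symm⟩
  set m := a s with hm_def
  set n := a t with hn_def
  have hmn : m < n := ha_mono hlt
  have hm0 : 0 < m := ha_pos s
  obtain ⟨p, hp, hnp⟩ : ∃ p, 0 < p ∧ n = m + p := ⟨n - m, by omega, by omega⟩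
  have hst : A.stateAt α (m + p) = A.stateAt α m := by
    rw [← hnp]
    exact (show A.stateAt α m = A.stateAt α n from congrArg Prod.fst heq).symm
  have hrmn : r n = r m :=
    (show r m = r n from congrArg Prod.snd heq).symm
  set j := bf (m + 1) with hj_def
  have hj1 : m < j := by have := hbf1 (m + 1); omega
  have hj2 : j ≤ n := by
    have h1 : a (s + 1) ≤ n := ha_mono.monotone hlt
    have h2 : j ≤ a (s + 1) := by rw [ha_succ]; exact haf1 _
    omega
  have hjacc : B.acc (r j) := hbf2 _
  set β : ℕ → S := fun i => α (phi m p i) with hβ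
  have hstate : ∀ i, A.stateAt β i = A.stateAt α (phi m p i) :=
    stateAt_phi A α hm0 hp hst
  have hstepβ : ∀ i, A.step β i = A.step α (phi m p i) :=
    step_phi A α hm0 hp hst
  have hNp : ∀ N : ℕ, N ≤ N * p := fun N => Nat.le_mul_of_pos_right N hp
  refine ⟨β, ⟨⟨?_, ?_⟩, ?_⟩, ?_⟩
  · -- infinitely many accepting positions
    intro N
    have hN := hNp N
    refine ⟨m + N * p, by omega, by omega, ?_⟩
    rw [hstate, phi_mtp hp]
    exact ha_acc s
  · -- the reset condition
    intro m' n' hlt' hm' hn' hbet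
    by_cases hcase : n' ≤ m + p
    · have hphi : ∀ i, i < m + p → phi m p i = i := fun i hi => phi_eq_self hi
      have hsum : A.vecSum β m' n' = A.vecSum α m' n' := by
        unfold DetPA.vecSum
        apply Finset.sum_congr rfl
        intro i hi
        simp only [Finset.mem_Ico] at hi
        rw [hstepβ i, hphi i (by omega)]
      rw [hsum]
      apply hSR.2 m' n' hlt'
      · rcases hm' with h | ⟨h1, h2⟩
        · exact Or.inl h
        · refine Or.inr ⟨h1, ?_⟩
          rw [hstate, hphi m' (by omega)] at h2
          exact h2
      · by_cases hn'n : n' = m + p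
        · rw [hn'n, ← hnp]; exact ha_acc t
        · have h2 := hn'
          rw [hstate, hphi n' (by omega)] at h2
          exact h2
      · intro jj hja hjb
        have h2 := hbet jj hja hjb
        rw [hstate, hphi jj (by omega)] at h2
        exact h2
    · push_neg at hcase
      obtain ⟨tq, htq_def⟩ : ∃ tq, tq = (n' - 1 - m) / p := ⟨_, rfl⟩
      obtain ⟨q, hq_def⟩ : ∃ q, q = tq * p := ⟨_, rfl⟩
      have hd : q + (n' - 1 - m) % p = n' - 1 - m := by
        rw [hq_def, htq_def, mul_comm]; exact Nat.div_add_mod _ _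
      have hm2 := Nat.mod_lt (n' - 1 - m) hp
      have hA1 : m + q < n' := by omega
      have hB1 : n' ≤ m + q + p := by omega
      have htq0 : 1 ≤ tq := by
        rw [htq_def]; exact (Nat.one_le_div_iff hp).2 (by omega)
      have hq_ge : p ≤ q := by
        rw [hq_def]; exact Nat.le_mul_of_pos_left p (by omega)
      have hmq_le : m + q ≤ m' := by
        by_contra hcon
        push_neg at hcon
        apply hbet (m + q) (by omega) (by omega)
        rw [hstate]
        have e : phi m p (m + q) = m := by rw [hq_def]; exact phi_mtp hp
        rw [e]
        exact ha_acc s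
      have hphi2 : ∀ i, m + q ≤ i → i < m + q + p → phi m p i = i - q := by
        intro i h1 h2
        have e1 : m + tq * p ≤ i := by rw [← hq_def]; omega
        have e2 : i < m + (tq + 1) * p := by
          have e : (tq + 1) * p = q + p := by rw [hq_def]; ring
          omega
        have e3 := phi_section hp e1 e2
        rw [← hq_def] at e3
        exact e3
      have hsum : A.vecSum β m' n' = A.vecSum α (m' - q) (n' - q) := by
        apply vecSum_shift A α β (by omega) (le_of_lt hlt')
        intro i h1 h2
        rw [hstepβ i, hphi2 i (by omega) (by omega)]
      rw [hsum]
      apply hSR.2 (m' - q) (n' - q) (by omega)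
      · refine Or.inr ⟨by omega, ?_⟩
        rcases hm' with h | ⟨_, h2⟩
        · omega
        · rw [hstate, hphi2 m' hmq_le (by omega)] at h2
          exact h2
      · by_cases he : n' = m + q + p
        · have e : n' - q = m + p := by omega
          rw [e, ← hnp]
          exact ha_acc t
        · have h2 := hn'
          rw [hstate, hphi2 n' (by omega) (by omega)] at h2
          exact h2
      · intro jj hja hjb
        have h2 := hbet (jj + q) (by omega) (by omega)
        rw [hstate, hphi2 (jj + q) (by omega) (by omega)] at h2
        rw [Nat.add_sub_cancel] at h2
        exact h2
  · -- Büchi acceptance of β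
    refine ⟨fun i => r (phi m p i), ?_, ?_, ?_⟩
    · have e : phi m p 0 = 0 := phi_eq_self (by omega)
      simp only [e]
      exact hr0
    · intro i
      show B.trans (r (phi m p i)) (α (phi m p i)) (r (phi m p (i + 1)))
      rcases phi_succ (m := m) hp i with hcs | ⟨h1, h2⟩
      · rw [hcs]; exact hrt (phi m p i)
      · rw [h2]
        have h3 := hrt (phi m p i)
        rw [h1, ← hnp, hrmn] at h3
        exact h3
    · intro N
      have hN := hNp N
      refine ⟨m + (j - m) + N * p, by omega, ?_⟩
      show B.acc (r (phi m p (m + (j - m) + N * p)))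
      rw [phi_add_mul (by omega)]
      have e : phi m p (m + (j - m)) = m + (j - m) % p := by
        unfold phi
        rw [if_neg (by omega), Nat.add_sub_cancel_left]
      rw [e]
      by_cases hjn : j - m < p
      · rw [Nat.mod_eq_of_lt hjn]
        have e2 : m + (j - m) = j := by omega
        rw [e2]
        exact hjacc
      · have e2 : j - m = p := by omega
        rw [e2, Nat.mod_self, Nat.add_zero, ← hrmn]
        have e3 : n = j := by omega
        rw [e3]
        exact hjacc
  · -- ultimately periodic
    refine ⟨m, p, hp, fun i hi => ?_⟩
    show α (phi m p (i + p)) = α (phi m p i)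
    rw [phi_add_p hi]
end

section
/- The deterministic reachability-regular PA recognizable languages are not closed under union: L₁ = {ucα | u ∈ {a,b,c}*, |u|_a = |u|_b, |α|_c = ∞} and L₂ = {vaβ | v ∈ {a,b,c}*, |v|_b = |v|_c, |β|_a = ∞} are each deterministic reachability-regular PA recognizable, but L₁ ∪ L₂ is not. -/
/-- `L₁ = {u c α | u ∈ {a,b,c}*, |u|_a = |u|_b, |α|_c = ∞}` over `Fin 3`
(`a := 0`, `b := 1`, `c := 2`). -/
def L14a : Set (ℕ → Fin 3) :=
  {β | ∃ n, β n = 2 ∧ (pref β n).count 0 = (pref β n).count 1 ∧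
    ∀ m, ∃ i, m ≤ i ∧ β i = 2}

/-- `L₂ = {v a β | v ∈ {a,b,c}*, |v|_b = |v|_c, |β|_a = ∞}`. -/
def L14b : Set (ℕ → Fin 3) :=
  {β | ∃ n, β n = 0 ∧ (pref β n).count 1 = (pref β n).count 2 ∧
    ∀ m, ∃ i, m ≤ i ∧ β i = 0}

def constTail {S : Type} (u : List S) (z : S) : ℕ → S := fun i => u.getD i z

section Words

variable {S : Type}

lemma constTail_of_lt_length {u : List S} {i : ℕ} (h : i < u.length) (z : S) :
    constTail u z i = u[i] :=
  List.getD_eq_getElem _ _ h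

lemma constTail_of_length_le {u : List S} {i : ℕ} (h : u.length ≤ i) (z : S) :
    constTail u z i = z :=
  List.getD_eq_default _ _ h

lemma pref_succ (α : ℕ → S) (n : ℕ) : pref α (n + 1) = pref α n ++ [α n] := by
  rw [pref, List.ofFn_succ', List.concat_eq_append]
  rfl

lemma pref_constTail (u : List S) (z : S) (n : ℕ) :
    pref (constTail u z) n = u.take n ++ List.replicate (n - u.length) z := by
  refine List.ext_getElem (by simp [pref]; omega) fun i hi _ => ?_
  have hin : i < n := by simpa [pref] using hi
  simp only [pref, List.getElem_ofFn, constTail, List.getD_eq_getElem?_getD, List.getElem_append,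
    List.getElem_take, List.getElem_replicate, List.length_take]
  split_ifs with h
  · simp [List.getElem?_eq_getElem (show i < u.length by omega)]
  · simp [List.getElem?_eq_none (show u.length ≤ i by omega)]

lemma pref_constTail_of_le {u : List S} {n : ℕ} (h : n ≤ u.length) (z : S) :
    pref (constTail u z) n = u.take n := by
  simp [pref_constTail, Nat.sub_eq_zero_of_le h]

lemma pref_constTail_length (u : List S) (z : S) : pref (constTail u z) u.length = u := by
  simp [pref_constTail]

lemma constTail_append_replicate (u : List S) (z : S) (k : ℕ) :
    constTail (u ++ List.replicate k z) z = constTail u z := by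
  funext i
  simp only [constTail, List.getD_eq_getElem?_getD, List.getElem?_append, List.getElem?_replicate]
  split_ifs <;> simp_all

end Words

lemma Function.isPeriodicPt_iterate_of_card_le {Q : Type} [Finite Q] (f : Q → Q) (q : Q) {n : ℕ}
    (hn : Nat.card Q ≤ n) : ∃ p, 0 < p ∧ Function.IsPeriodicPt f p (f^[n] q) := by
  have : Fintype Q := Fintype.ofFinite Q
  obtain ⟨i, j, hlt, heq⟩ : ∃ i j : Fin (n + 1), i < j ∧ f^[i] q = f^[j] q := by
    obtain ⟨i, j, hne, heq⟩ := Fintype.exists_ne_map_eq_of_card_lt (fun i : Fin (n + 1) => f^[i] q)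
      (by simpa [Nat.card_eq_fintype_card] using Nat.lt_succ_of_le hn)
    rcases hne.lt_or_gt with h | h
    exacts [⟨i, j, h, heq⟩, ⟨j, i, h, heq.symm⟩]
  refine ⟨j - i, by omega, ?_⟩
  calc f^[j - i] (f^[n] q) = f^[n - i] (f^[j] q) := by
        rw [← Function.iterate_add_apply, ← Function.iterate_add_apply]; congr 1; omega
    _ = f^[n] q := by
        rw [← heq, ← Function.iterate_add_apply]; congr 1; omega

namespace DetPA

section

variable {Q S M : Type} {d : ℕ} (A : DetPA Q S d M)

lemma runList_append (p : Q) (u v : List S) :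
    A.runList p (u ++ v) = A.runList (A.runList p u) v := by
  induction u generalizing p with
  | nil => rfl
  | cons a u ih => exact ih _

lemma sumList_append (p : Q) (u v : List S) :
    A.sumList p (u ++ v) = A.sumList p u + A.sumList (A.runList p u) v := by
  induction u generalizing p with
  | nil => simp [sumList, runList]
  | cons a u ih => simp [sumList, runList, ih, add_assoc]

lemma runList_replicate (p : Q) (x : S) (k : ℕ) :
    A.runList p (List.replicate k x) = (fun q => (A.trans q x).2)^[k] p := by
  induction k generalizing p with
  | zero => rfl
  | succ k ih => exact ih _

lemma stateAt_eq_runList (α : ℕ → S) (n : ℕ) :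
    A.stateAt α n = A.runList A.init (pref α n) := by
  induction n with
  | zero => rfl
  | succ n ih => rw [pref_succ, runList_append, ← ih]; rfl

lemma vecSum_zero_eq_sumList (α : ℕ → S) (n : ℕ) :
    A.vecSum α 0 n = A.sumList A.init (pref α n) := by
  induction n with
  | zero => rfl
  | succ n ih =>
    rw [vecSum, ← Finset.range_eq_Ico, Finset.sum_range_succ, Finset.range_eq_Ico, ← vecSum, ih,
      pref_succ, sumList_append, ← stateAt_eq_runList]
    simp [sumList, step]

lemma stateAt_add (α : ℕ → S) (m i : ℕ) :
    A.stateAt α (m + i) = A.run (A.stateAt α m) (fun j => α (m + j)) i := by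
  induction i with
  | zero => rfl
  | succ i ih => exact congrArg (fun q => (A.trans q (α (m + i))).2) ih

lemma infAcc_constTail_of_runList_eq {u v : List S} (z : S)
    (h : A.runList A.init u = A.runList A.init v) (hu : A.InfAcc (constTail u z)) :
    A.InfAcc (constTail v z) := by
  have tail_eq : ∀ w : List S, (fun j => constTail w z (w.length + j)) = fun _ => z :=
    fun w => funext fun j => constTail_of_length_le (by omega) z
  have hrun : ∀ i, A.stateAt (constTail u z) (u.length + i) =
      A.stateAt (constTail v z) (v.length + i) := fun i => by
    rw [stateAt_add, stateAt_add, tail_eq, tail_eq, stateAt_eq_runList, stateAt_eq_runList,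
      pref_constTail_length, pref_constTail_length, h]
  intro n
  obtain ⟨i, hi, hacc⟩ := hu (u.length + n)
  refine ⟨v.length + (i - u.length), by omega, ?_⟩
  rwa [← hrun, Nat.add_sub_cancel' (by omega)]

lemma infAcc_constTail_pump {u : List S} {x : S} {p : ℕ} (z : S)
    (hp : Function.IsPeriodicPt (fun q => (A.trans q x).2) p (A.runList A.init u))
    (hu : A.InfAcc (constTail u z)) : A.InfAcc (constTail (u ++ List.replicate p x) z) :=
  A.infAcc_constTail_of_runList_eq z (by rw [runList_append, runList_replicate, hp.eq]) hu

lemma exists_isPeriodicPt_runList_append_replicate [Finite Q] (q : Q) (u : List S) (x : S)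
    {n : ℕ} (hn : Nat.card Q ≤ n) : ∃ p, 0 < p ∧ Function.IsPeriodicPt
      (fun q => (A.trans q x).2) p (A.runList q (u ++ List.replicate n x)) := by
  rw [A.runList_append, A.runList_replicate]
  exact Function.isPeriodicPt_iterate_of_card_le _ _ hn

end

lemma reachAccept_of_pref_eq {Q S : Type} {d : ℕ} (A : DetPA Q S d ℕ) {α β : ℕ → S} {ℓ : ℕ}
    (hℓ : 1 ≤ ℓ) (hacc : A.acc (A.stateAt α ℓ)) (hC : A.vecSum α 0 ℓ ∈ A.C)
    (h : pref α ℓ = pref β ℓ) : A.ReachAccept β := by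
  rw [stateAt_eq_runList, h, ← stateAt_eq_runList] at hacc
  rw [vecSum_zero_eq_sumList, h, ← vecSum_zero_eq_sumList] at hC
  exact ⟨ℓ, hℓ, hacc, hC⟩

end DetPA

def balancedPrefixLang {S : Type} [DecidableEq S] (x y z : S) : Set (ℕ → S) :=
  {β | ∃ n, β n = z ∧ (pref β n).count x = (pref β n).count y ∧ ∀ m, ∃ i, m ≤ i ∧ β i = z}

section Recognizer

variable {S : Type} [DecidableEq S]

def balanceDPA (x y z : S) : DetPA Bool S 2 ℕ where
  init := false
  trans := fun _ s => (![if s = x then 1 else 0, if s = y then 1 else 0], decide (s = z))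
  acc := fun q => q = true
  C := {v | v 0 = v 1}

lemma semiLin_balanceDPA_C (x y z : S) : SemiLin (balanceDPA x y z).C := by
  refine ⟨1, fun _ => 0, fun _ => {![1, 1]}, ?_⟩
  ext v
  simp only [balanceDPA, Set.mem_ofPred_eq, Set.mem_iUnion, LinSet, Finset.sum_singleton, zero_add,
    exists_const]
  constructor
  · intro h
    exact ⟨fun _ => v 0, funext fun j => by fin_cases j <;> simp [h]⟩
  · rintro ⟨k, rfl⟩
    simp

lemma sumList_balanceDPA (x y z : S) (p : Bool) (w : List S) :
    (balanceDPA x y z).sumList p w = ![w.count x, w.count y] := by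
  induction w generalizing p with
  | nil => funext j; fin_cases j <;> rfl
  | cons a w ih =>
    simp only [DetPA.sumList, ih, List.count_cons]
    funext j
    fin_cases j <;> simp [balanceDPA, add_comm]

lemma stateAt_succ_balanceDPA (x y z : S) (α : ℕ → S) (n : ℕ) :
    (balanceDPA x y z).stateAt α (n + 1) = decide (α n = z) := rfl

lemma balanceDPA_reachRegAccept_iff {x y z : S} (hx : x ≠ z) (hy : y ≠ z) (β : ℕ → S) :
    (balanceDPA x y z).ReachRegAccept β ↔ β ∈ balancedPrefixLang x y z := by
  have hC : ∀ n, (balanceDPA x y z).vecSum β 0 n ∈ (balanceDPA x y z).C ↔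
      (pref β n).count x = (pref β n).count y := fun n => by
    rw [DetPA.vecSum_zero_eq_sumList, sumList_balanceDPA]
    rfl
  have hacc : ∀ n, (balanceDPA x y z).acc ((balanceDPA x y z).stateAt β (n + 1)) ↔ β n = z :=
    fun n => by rw [stateAt_succ_balanceDPA]; simp [balanceDPA]
  constructor
  · rintro ⟨⟨i, hi, hi_acc, hi_C⟩, hinf⟩
    obtain ⟨n, rfl⟩ : ∃ n, i = n + 1 := ⟨i - 1, by omega⟩
    have hn := (hacc n).1 hi_acc
    refine ⟨n, hn, ?_, fun m => ?_⟩
    · simpa [pref_succ, hn, hx.symm, hy.symm] using (hC _).1 hi_C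
    · obtain ⟨j, hj, hj_acc⟩ := hinf (m + 1)
      obtain ⟨k, rfl⟩ : ∃ k, j = k + 1 := ⟨j - 1, by omega⟩
      exact ⟨k, by omega, (hacc k).1 hj_acc⟩
  · rintro ⟨n, hn, hbal, hinf⟩
    refine ⟨⟨n + 1, by omega, (hacc n).2 hn, (hC _).2 ?_⟩, fun m => ?_⟩
    · simpa [pref_succ, hn, hx.symm, hy.symm] using hbal
    · obtain ⟨j, hj, hj_z⟩ := hinf m
      exact ⟨j + 1, by omega, (hacc j).2 hj_z⟩

lemma detReachRegRecog_balancedPrefixLang {x y z : S} (hx : x ≠ z) (hy : y ≠ z) :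
    DetReachRegRecog (balancedPrefixLang x y z) :=
  ⟨2, Bool, inferInstance, balanceDPA x y z, semiLin_balanceDPA_C x y z,
    Set.ext fun β => (balanceDPA_reachRegAccept_iff hx hy β).symm⟩

end Recognizer

section Membership

variable {S : Type} [DecidableEq S]

lemma constTail_mem_balancedPrefixLang {u : List S} {x y : S} (z : S)
    (h : u.count x = u.count y) : constTail u z ∈ balancedPrefixLang x y z :=
  ⟨u.length, constTail_of_length_le le_rfl z, by rwa [pref_constTail_length],
    fun m => ⟨u.length + m, by omega, constTail_of_length_le (by omega) z⟩⟩

lemma constTail_not_mem_balancedPrefixLang_of_ne (u : List S) (x y : S) {z z' : S}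
    (h : z' ≠ z) : constTail u z' ∉ balancedPrefixLang x y z := by
  rintro ⟨-, -, -, hinf⟩
  obtain ⟨i, hi, hz⟩ := hinf u.length
  exact h (by rwa [constTail_of_length_le hi] at hz)

/-- An occurrence of `z` in `constTail (l₁ ++ l₂) z` lies in `l₁` or in the tail. -/
lemma constTail_append_not_mem_balancedPrefixLang {l₁ l₂ : List S} {x y z : S}
    (hx : x ≠ z) (hy : y ≠ z) (hl₁ : ∀ v w, l₁ = v ++ z :: w → v.count x ≠ v.count y)
    (hl₂ : z ∉ l₂) (hu : (l₁ ++ l₂).count x ≠ (l₁ ++ l₂).count y) :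
    constTail (l₁ ++ l₂) z ∉ balancedPrefixLang x y z := by
  rintro ⟨n, hn, hbal, -⟩
  rcases lt_or_ge n (l₁ ++ l₂).length with hlt | hge
  · have hz : (l₁ ++ l₂)[n] = z := by rwa [constTail_of_lt_length hlt] at hn
    rcases lt_or_ge n l₁.length with h₁ | h₁
    · rw [List.getElem_append_left h₁] at hz
      refine hl₁ (l₁.take n) (l₁.drop (n + 1)) ?_ ?_
      · rw [← hz, ← List.drop_eq_getElem_cons, List.take_append_drop]
      · rwa [pref_constTail_of_le hlt.le, List.take_append_of_le_length h₁.le] at hbal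
    · rw [List.getElem_append_right h₁] at hz
      exact hl₂ (hz ▸ List.getElem_mem _)
  · rw [pref_constTail, List.take_of_length_le hge] at hbal
    simp [List.count_replicate, hx.symm, hy.symm] at hbal hu
    exact hu hbal

end Membership

section NotClosed

variable {S : Type} [DecidableEq S] {a b c : S}

open List

lemma count_ne_count_of_cons_replicate_eq (hab : a ≠ b) (hbc : b ≠ c) (hac : a ≠ c) {y : ℕ}
    {v w : List S} (h : b :: replicate (y + 1) a = v ++ a :: w) : v.count b ≠ v.count c := by
  cases v with
  | nil => exact absurd (cons_eq_cons.1 h).1.symm hab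
  | cons e v =>
    obtain ⟨rfl, hv : replicate (y + 1) a = v ++ a :: w⟩ := cons_eq_cons.1 h
    have hva : ∀ s ∈ v, s = a := fun s hs => eq_of_mem_replicate (hv ▸ mem_append_left _ hs)
    have hb : v.count b = 0 := count_eq_zero.2 fun hm => hab (hva b hm).symm
    have hc : v.count c = 0 := count_eq_zero.2 fun hm => hac (hva c hm).symm
    simp [hb, hc, hbc]

lemma constTail_append_replicate_b_not_mem_union (hab : a ≠ b) (hbc : b ≠ c) (hac : a ≠ c)
    (y : ℕ) {p : ℕ} (hp : 0 < p) :
    constTail (b :: replicate (y + 1) a ++ replicate y b ++ replicate p b) c ∉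
      balancedPrefixLang a b c ∪ balancedPrefixLang b c a := by
  rintro (h | h)
  · refine constTail_append_not_mem_balancedPrefixLang (l₁ := []) hac hbc (by simp)
      (by simp [hac.symm, hbc.symm]) ?_ h
    simp [count_replicate, hab, hab.symm]
    omega
  · exact constTail_not_mem_balancedPrefixLang_of_ne _ _ _ hac.symm h

lemma constTail_append_replicate_c_not_mem_union (hab : a ≠ b) (hbc : b ≠ c) (hac : a ≠ c)
    (y : ℕ) {t : ℕ} (ht : 0 < t) :
    constTail
        (b :: replicate (y + 1) a ++ replicate y b ++ replicate (y + 1) c ++ replicate t c) a ∉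
      balancedPrefixLang a b c ∪ balancedPrefixLang b c a := by
  rintro (h | h)
  · exact constTail_not_mem_balancedPrefixLang_of_ne _ _ _ hac h
  · simp only [append_assoc] at h
    refine constTail_append_not_mem_balancedPrefixLang hab.symm hac.symm
      (fun _ _ hvw => count_ne_count_of_cons_replicate_eq hab hbc hac hvw) (by simp [hab, hac]) ?_ h
    simp [count_replicate, hab, hbc, hbc.symm]
    omega

theorem not_detReachRegRecog_union_balancedPrefixLang (hab : a ≠ b) (hbc : b ≠ c)
    (hac : a ≠ c) : ¬ DetReachRegRecog (balancedPrefixLang a b c ∪ balancedPrefixLang b c a) := by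
  rintro ⟨d, Q, hQ, A, -, hL⟩
  have hA : ∀ β, A.ReachRegAccept β ↔ β ∈ balancedPrefixLang a b c ∪ balancedPrefixLang b c a :=
    fun β => by rw [hL]; rfl
  set y := Nat.card Q
  set u := b :: replicate (y + 1) a ++ replicate y b
  obtain ⟨⟨ℓ, hℓ, hℓ_acc, hℓ_C⟩, hinf⟩ := (hA (constTail u c)).2 <| .inl <|
    constTail_mem_balancedPrefixLang c (by simp [u, count_replicate, hab, hab.symm])
  rcases le_or_gt ℓ u.length with hshort | hlong
  · obtain ⟨p, hp, hper⟩ := A.exists_isPeriodicPt_runList_append_replicate A.init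
      (b :: replicate (y + 1) a) b (le_refl y)
    refine constTail_append_replicate_b_not_mem_union hab hbc hac y hp <| (hA _).1
      ⟨A.reachAccept_of_pref_eq hℓ hℓ_acc hℓ_C ?_, A.infAcc_constTail_pump c hper hinf⟩
    rw [pref_constTail_of_le hshort,
      pref_constTail_of_le (by rw [length_append]; exact Nat.le_add_right_of_le hshort),
      take_append_of_le_length hshort]
  · have hW := (hA (constTail (u ++ replicate (y + 1) c) a)).2 <| .inr <|
      constTail_mem_balancedPrefixLang a (by simp [u, count_replicate, hab, hbc, hbc.symm]; omega)
    obtain ⟨p, hp, hper⟩ := A.exists_isPeriodicPt_runList_append_replicate A.init u c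
      (n := y + 1) (by omega)
    have hpℓ : ℓ ≤ p * ℓ := Nat.le_mul_of_pos_left ℓ hp
    refine constTail_append_replicate_c_not_mem_union hab hbc hac y (by omega) <| (hA _).1
      ⟨A.reachAccept_of_pref_eq hℓ hℓ_acc hℓ_C ?_,
        A.infAcc_constTail_pump a (hper.mul_const ℓ) hW.2⟩
    rw [← constTail_append_replicate u c (y + 1 + p * ℓ), pref_constTail_of_le (by simp; omega),
      pref_constTail_of_le (by simp; omega), replicate_add]
    simp only [u, append_assoc]

end NotClosed

/-- `L₁` and `L₂` are deterministic reachability-regular PA recognizable,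
but `L₁ ∪ L₂` is not, so the class is not closed under union. -/
theorem detReachReg_not_closed_union :
    DetReachRegRecog L14a ∧ DetReachRegRecog L14b ∧
    ¬ DetReachRegRecog (L14a ∪ L14b) :=
  ⟨detReachRegRecog_balancedPrefixLang (x := 0) (y := 1) (z := 2) (by decide) (by decide),
    detReachRegRecog_balancedPrefixLang (x := 1) (y := 2) (z := 0) (by decide) (by decide),
    not_detReachRegRecog_union_balancedPrefixLang (a := 0) (b := 1) (c := 2) (by decide)
      (by decide) (by decide)⟩
end

section
/- For every integer expression e one can construct a linear set C(0, P) ⊆ ℕ^{1+d} (with all period vectors having at least one coordinate equal to 1 among the last d coordinates) such that for all n ∈ ℕ: n ∈ L(e) if and only if the vector (n, 1, 1, ..., 1) ∈ C(0, P). Moreover, d and |P| are linear in the number of operators of e. -/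
/-- Integer expressions. -/
inductive IntExpr : Type
  | const : ℕ → IntExpr
  | add : IntExpr → IntExpr → IntExpr
  | union : IntExpr → IntExpr → IntExpr

/-- The set of integers denoted by an integer expression. -/
def IntExpr.lang : IntExpr → Set ℕ
  | .const n => {n}
  | .add e₁ e₂ => {m | ∃ u ∈ e₁.lang, ∃ v ∈ e₂.lang, m = u + v}
  | .union e₁ e₂ => e₁.lang ∪ e₂.lang

/-- The number of operators of an integer expression. -/
def IntExpr.ops : IntExpr → ℕ
  | .const _ => 0
  | .add e₁ e₂ => e₁.ops + e₂.ops + 1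
  | .union e₁ e₂ => e₁.ops + e₂.ops + 1

/-! Each leaf and each union node of `e` contributes one counter coordinate, and every period
fills at least one counter; since all counters of the target `(n, 1, …, 1)` equal `1`, a period
touching a counter that is already full cannot be used. For a sum, the periods of the operands act
on disjoint counter blocks and their values add up. For a union, a fresh selector counter is
filled by exactly one of two extra periods, each of which also fills every counter of one operand
and thereby switches that operand off. -/

open Submodule
open scoped Pointwise

variable {ι ι₁ ι₂ : Type}

theorem linSet_zero_eq_span {d : ℕ} {M : Type} [AddCommMonoid M] (P : Finset (Fin d → M)) :
    LinSet 0 P = span ℕ (P : Set (Fin d → M)) := by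
  ext v
  refine ⟨?_, fun hv => ?_⟩
  · rintro ⟨z, rfl⟩
    rw [zero_add]
    exact sum_mem fun p hp => smul_mem _ _ (subset_span hp)
  · obtain ⟨z, -, rfl⟩ := mem_span_finset.1 hv
    exact ⟨z, (zero_add _).symm⟩

theorem eq_zero_of_mem_span_of_snd_eq_zero {s : Set (ℕ × (ι → ℕ))} (hs : ∀ p ∈ s, p.2 ≠ 0)
    {x : ℕ × (ι → ℕ)} (hx : x ∈ span ℕ s) (h : x.2 = 0) : x = 0 := by
  induction hx using span_induction with
  | mem p hp => exact absurd h (hs p hp)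
  | zero => rfl
  | add x y _ _ hx hy =>
    rw [Prod.snd_add, add_eq_zero] at h
    rw [hx h.1, hy h.2, add_zero]
  | smul c x _ hx =>
    rw [Prod.smul_snd, smul_eq_zero] at h
    rcases h with rfl | h
    · exact zero_smul ℕ x
    · rw [hx h, smul_zero]

variable (ι₁ ι₂) in
def embedLeft : ℕ × (ι₁ → ℕ) →ₗ[ℕ] ℕ × (ι₁ ⊕ ι₂ → ℕ) where
  toFun x := (x.1, Sum.elim x.2 0)
  map_add' x y := by ext (_ | _) <;> simp
  map_smul' c x := by ext (_ | _) <;> simp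

variable (ι₁ ι₂) in
def embedRight : ℕ × (ι₂ → ℕ) →ₗ[ℕ] ℕ × (ι₁ ⊕ ι₂ → ℕ) where
  toFun x := (x.1, Sum.elim 0 x.2)
  map_add' x y := by ext (_ | _) <;> simp
  map_smul' c x := by ext (_ | _) <;> simp

theorem embedLeft_add_embedRight (a : ℕ × (ι₁ → ℕ)) (b : ℕ × (ι₂ → ℕ)) :
    embedLeft ι₁ ι₂ a + embedRight ι₁ ι₂ b = (a.1 + b.1, Sum.elim a.2 b.2) := by
  simp [embedLeft, embedRight, ← Sum.elim_add_add]

open Classical in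
noncomputable def sumPeriods (P₁ : Finset (ℕ × (ι₁ → ℕ))) (P₂ : Finset (ℕ × (ι₂ → ℕ))) :
    Finset (ℕ × (ι₁ ⊕ ι₂ → ℕ)) :=
  P₁.image (embedLeft ι₁ ι₂) ∪ P₂.image (embedRight ι₁ ι₂)

theorem card_sumPeriods_le (P₁ : Finset (ℕ × (ι₁ → ℕ))) (P₂ : Finset (ℕ × (ι₂ → ℕ))) :
    (sumPeriods P₁ P₂).card ≤ P₁.card + P₂.card := by
  classical
  exact (Finset.card_union_le _ _).trans (add_le_add Finset.card_image_le Finset.card_image_le)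

theorem mem_span_sumPeriods {P₁ : Finset (ℕ × (ι₁ → ℕ))} {P₂ : Finset (ℕ × (ι₂ → ℕ))}
    {x : ℕ × (ι₁ ⊕ ι₂ → ℕ)} :
    x ∈ span ℕ (sumPeriods P₁ P₂ : Set (ℕ × (ι₁ ⊕ ι₂ → ℕ))) ↔
      ∃ a ∈ span ℕ (P₁ : Set (ℕ × (ι₁ → ℕ))), ∃ b ∈ span ℕ (P₂ : Set (ℕ × (ι₂ → ℕ))),
        x = (a.1 + b.1, Sum.elim a.2 b.2) := by
  simp only [sumPeriods, Finset.coe_union, Finset.coe_image, span_union, span_image, mem_sup,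
    mem_map, ← embedLeft_add_embedRight]
  constructor
  · rintro ⟨_, ⟨a, ha, rfl⟩, _, ⟨b, hb, rfl⟩, rfl⟩
    exact ⟨a, ha, b, hb, rfl⟩
  · rintro ⟨a, ha, b, hb, rfl⟩
    exact ⟨_, ⟨a, ha, rfl⟩, _, ⟨b, hb, rfl⟩, rfl⟩

open Classical in
/-- The counter `Sum.inl ()` is the selector; the two extra periods fill it together with all
counters of `P₁`, respectively of `P₂`. -/
noncomputable def unionPeriods (P₁ : Finset (ℕ × (ι₁ → ℕ))) (P₂ : Finset (ℕ × (ι₂ → ℕ))) :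
    Finset (ℕ × (Unit ⊕ (ι₁ ⊕ ι₂) → ℕ)) :=
  (sumPeriods P₁ P₂).image (embedRight Unit (ι₁ ⊕ ι₂)) ∪
    {(0, Sum.elim (1 : Unit → ℕ) (Sum.elim 1 0)), (0, Sum.elim (1 : Unit → ℕ) (Sum.elim 0 1))}

theorem card_unionPeriods_le (P₁ : Finset (ℕ × (ι₁ → ℕ))) (P₂ : Finset (ℕ × (ι₂ → ℕ))) :
    (unionPeriods P₁ P₂).card ≤ P₁.card + P₂.card + 2 := by
  classical
  exact (Finset.card_union_le _ _).trans
    (add_le_add (Finset.card_image_le.trans (card_sumPeriods_le P₁ P₂)) Finset.card_le_two)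

theorem mem_span_unionPeriods {P₁ : Finset (ℕ × (ι₁ → ℕ))} {P₂ : Finset (ℕ × (ι₂ → ℕ))}
    {x : ℕ × (Unit ⊕ (ι₁ ⊕ ι₂) → ℕ)} :
    x ∈ span ℕ (unionPeriods P₁ P₂ : Set (ℕ × (Unit ⊕ (ι₁ ⊕ ι₂) → ℕ))) ↔
      ∃ a ∈ span ℕ (P₁ : Set (ℕ × (ι₁ → ℕ))), ∃ b ∈ span ℕ (P₂ : Set (ℕ × (ι₂ → ℕ))),
        ∃ k m : ℕ,
          x = (a.1 + b.1, Sum.elim ((k + m) • 1) (Sum.elim (a.2 + k • 1) (b.2 + m • 1))) := by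
  have hcombine (a : ℕ × (ι₁ → ℕ)) (b : ℕ × (ι₂ → ℕ)) (k m : ℕ) :
      embedRight Unit (ι₁ ⊕ ι₂) (a.1 + b.1, Sum.elim a.2 b.2) +
        (k • ((0, Sum.elim 1 (Sum.elim 1 0)) : ℕ × (Unit ⊕ (ι₁ ⊕ ι₂) → ℕ)) +
          m • ((0, Sum.elim 1 (Sum.elim 0 1)) : ℕ × (Unit ⊕ (ι₁ ⊕ ι₂) → ℕ))) =
      (a.1 + b.1, Sum.elim ((k + m) • 1) (Sum.elim (a.2 + k • 1) (b.2 + m • 1))) := by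
    ext (_ | _ | _) <;> simp [embedRight]
  simp only [unionPeriods, Finset.coe_union, Finset.coe_image, Finset.coe_insert,
    Finset.coe_singleton, span_union, span_image, mem_sup, mem_map, mem_span_pair,
    mem_span_sumPeriods]
  constructor
  · rintro ⟨_, ⟨_, ⟨a, ha, b, hb, rfl⟩, rfl⟩, _, ⟨k, m, rfl⟩, rfl⟩
    exact ⟨a, ha, b, hb, k, m, hcombine a b k m⟩
  · rintro ⟨a, ha, b, hb, k, m, rfl⟩
    exact ⟨_, ⟨_, ⟨a, ha, b, hb, rfl⟩, rfl⟩, _, ⟨k, m, rfl⟩, hcombine a b k m⟩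

/-- `ℕ × (ι → ℕ)` stands for `ℕ^{1+d}`: the first component is the value coordinate, `ι` indexes
the last `d` coordinates, and `P` is the period set of the linear set `C(0, P)`. -/
structure Encodes (L : Set ℕ) (P : Finset (ℕ × (ι → ℕ))) : Prop where
  exists_snd_eq_one : ∀ p ∈ P, ∃ i, p.2 i = 1
  mem_iff : ∀ n, n ∈ L ↔ (n, 1) ∈ span ℕ (P : Set (ℕ × (ι → ℕ)))

namespace Encodes

variable {L L₁ L₂ : Set ℕ} {P : Finset (ℕ × (ι → ℕ))} {P₁ : Finset (ℕ × (ι₁ → ℕ))}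
  {P₂ : Finset (ℕ × (ι₂ → ℕ))}

theorem snd_ne_zero (h : Encodes L P) : ∀ p ∈ (P : Set (ℕ × (ι → ℕ))), p.2 ≠ 0 := by
  intro p hp hp0
  obtain ⟨i, hi⟩ := h.exists_snd_eq_one p hp
  simp [hp0] at hi

theorem fst_mem (h : Encodes L P) {a : ℕ × (ι → ℕ)} (ha : a ∈ span ℕ (P : Set (ℕ × (ι → ℕ))))
    (ha1 : a.2 = 1) : a.1 ∈ L :=
  (h.mem_iff a.1).2 (by rwa [← ha1])

theorem singleton (n : ℕ) : Encodes {n} ({(n, 1)} : Finset (ℕ × (Unit → ℕ))) where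
  exists_snd_eq_one p hp := ⟨(), by rw [Finset.mem_singleton.1 hp]; rfl⟩
  mem_iff m := by
    rw [Finset.coe_singleton, mem_span_singleton, Set.mem_singleton_iff]
    constructor
    · rintro rfl
      exact ⟨1, one_smul _ _⟩
    · rintro ⟨a, ha⟩
      have ha1 : a = 1 := by simpa using congrFun (congrArg Prod.snd ha) ()
      simpa [ha1, eq_comm] using congrArg Prod.fst ha

theorem add (h₁ : Encodes L₁ P₁) (h₂ : Encodes L₂ P₂) : Encodes (L₁ + L₂) (sumPeriods P₁ P₂) where
  exists_snd_eq_one := by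
    simp only [sumPeriods, Finset.mem_union, Finset.mem_image]
    rintro _ (⟨p, hp, rfl⟩ | ⟨p, hp, rfl⟩)
    · obtain ⟨i, hi⟩ := h₁.exists_snd_eq_one p hp
      exact ⟨Sum.inl i, hi⟩
    · obtain ⟨i, hi⟩ := h₂.exists_snd_eq_one p hp
      exact ⟨Sum.inr i, hi⟩
  mem_iff n := by
    rw [mem_span_sumPeriods, Set.mem_add]
    constructor
    · rintro ⟨u, hu, v, hv, rfl⟩
      exact ⟨(u, 1), (h₁.mem_iff u).1 hu, (v, 1), (h₂.mem_iff v).1 hv, by simp⟩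
    · rintro ⟨a, ha, b, hb, hab⟩
      rw [← Sum.elim_one_one, Prod.mk.injEq, Sum.elim_eq_iff] at hab
      obtain ⟨rfl, ha1, hb1⟩ := hab
      exact ⟨a.1, h₁.fst_mem ha ha1.symm, b.1, h₂.fst_mem hb hb1.symm, rfl⟩

theorem union (h₁ : Encodes L₁ P₁) (h₂ : Encodes L₂ P₂) :
    Encodes (L₁ ∪ L₂) (unionPeriods P₁ P₂) where
  exists_snd_eq_one := by
    simp only [unionPeriods, Finset.mem_union, Finset.mem_image, Finset.mem_insert,
      Finset.mem_singleton]
    rintro _ (⟨p, hp, rfl⟩ | rfl | rfl)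
    · obtain ⟨i, hi⟩ := (h₁.add h₂).exists_snd_eq_one p hp
      exact ⟨Sum.inr i, hi⟩
    · exact ⟨Sum.inl (), rfl⟩
    · exact ⟨Sum.inl (), rfl⟩
  mem_iff n := by
    rw [mem_span_unionPeriods, Set.mem_union]
    constructor
    · rintro (hn | hn)
      · exact ⟨(n, 1), (h₁.mem_iff n).1 hn, 0, zero_mem _, 0, 1, by ext (_ | _ | _) <;> simp⟩
      · exact ⟨0, zero_mem _, (n, 1), (h₂.mem_iff n).1 hn, 1, 0, by ext (_ | _ | _) <;> simp⟩
    · rintro ⟨a, ha, b, hb, k, m, hx⟩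
      rw [← Sum.elim_one_one, ← Sum.elim_one_one, Prod.mk.injEq, Sum.elim_eq_iff,
        Sum.elim_eq_iff] at hx
      obtain ⟨rfl, hkm, ha1, hb1⟩ := hx
      have hselect : k + m = 1 := by simpa using (congrFun hkm ()).symm
      obtain ⟨rfl, rfl⟩ | ⟨rfl, rfl⟩ : k = 0 ∧ m = 1 ∨ k = 1 ∧ m = 0 := by omega
      · have hb0 : b = 0 :=
          eq_zero_of_mem_span_of_snd_eq_zero h₂.snd_ne_zero hb (by simpa using hb1.symm)
        left
        simpa [hb0] using h₁.fst_mem ha (by simpa using ha1.symm)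
      · have ha0 : a = 0 :=
          eq_zero_of_mem_span_of_snd_eq_zero h₁.snd_ne_zero ha (by simpa using ha1.symm)
        right
        simpa [ha0] using h₂.fst_mem hb (by simpa using hb1.symm)

theorem exists_finset_fin [Fintype ι] (h : Encodes L P) :
    ∃ P' : Finset (Fin (Fintype.card ι + 1) → ℕ), P'.card ≤ P.card ∧
      (∀ p ∈ P', ∃ i : Fin (Fintype.card ι + 1), i ≠ 0 ∧ p i = 1) ∧
      ∀ n : ℕ, n ∈ L ↔
        (fun i : Fin (Fintype.card ι + 1) => if i = 0 then n else 1) ∈ LinSet 0 P' := by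
  let e := Fintype.equivFin ι
  let Φ : (ℕ × (ι → ℕ)) ≃ₗ[ℕ] (Fin (Fintype.card ι + 1) → ℕ) :=
    ((LinearEquiv.refl ℕ ℕ).prodCongr (LinearEquiv.funCongrLeft ℕ ℕ e.symm)).trans
      (Fin.consLinearEquiv ℕ fun _ => ℕ)
  have hΦ (x : ℕ × (ι → ℕ)) (i : ι) : Φ x (e i).succ = x.2 i := by simp [Φ]
  have hΦ1 (n : ℕ) : Φ (n, 1) = fun i => if i = 0 then n else 1 := by
    ext i
    cases i using Fin.cases <;> simp [Φ, Fin.succ_ne_zero]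
  refine ⟨P.image Φ, Finset.card_image_le, ?_, fun n => ?_⟩
  · simp only [Finset.mem_image]
    rintro _ ⟨p, hp, rfl⟩
    obtain ⟨i, hi⟩ := h.exists_snd_eq_one p hp
    exact ⟨(e i).succ, Fin.succ_ne_zero _, by rw [hΦ, hi]⟩
  · rw [h.mem_iff, linSet_zero_eq_span, ← hΦ1, Finset.coe_image, SetLike.mem_coe]
    exact (apply_mem_span_image_iff_mem_span (f := Φ.toLinearMap) Φ.injective).symm

end Encodes

theorem IntExpr.lang_add (e₁ e₂ : IntExpr) : (IntExpr.add e₁ e₂).lang = e₁.lang + e₂.lang := by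
  ext m
  simp only [IntExpr.lang, Set.mem_ofPred_eq, Set.mem_add, eq_comm]

theorem IntExpr.exists_encodes (e : IntExpr) :
    ∃ (ι : Type) (_ : Fintype ι) (P : Finset (ℕ × (ι → ℕ))),
      Encodes e.lang P ∧ Fintype.card ι ≤ 2 * e.ops + 1 ∧ P.card ≤ 3 * e.ops + 1 := by
  induction e with
  | const n => exact ⟨Unit, inferInstance, _, Encodes.singleton n, le_rfl, le_rfl⟩
  | add e₁ e₂ ih₁ ih₂ =>
    obtain ⟨ι₁, _, P₁, h₁, hι₁, hP₁⟩ := ih₁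
    obtain ⟨ι₂, _, P₂, h₂, hι₂, hP₂⟩ := ih₂
    refine ⟨ι₁ ⊕ ι₂, inferInstance, _, lang_add e₁ e₂ ▸ h₁.add h₂, ?_, ?_⟩
    · simp only [Fintype.card_sum, IntExpr.ops]
      omega
    · have := card_sumPeriods_le P₁ P₂
      simp only [IntExpr.ops]
      omega
  | union e₁ e₂ ih₁ ih₂ =>
    obtain ⟨ι₁, _, P₁, h₁, hι₁, hP₁⟩ := ih₁
    obtain ⟨ι₂, _, P₂, h₂, hι₂, hP₂⟩ := ih₂
    refine ⟨Unit ⊕ (ι₁ ⊕ ι₂), inferInstance, _, h₁.union h₂, ?_, ?_⟩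
    · simp only [Fintype.card_sum, Fintype.card_unit, IntExpr.ops]
      omega
    · have := card_unionPeriods_le P₁ P₂
      simp only [IntExpr.ops]
      omega

/-- for every integer expression `e` there is a linear set `C(0,P) ⊆ ℕ^{1+d}`
(all period vectors having a coordinate equal to `1` among the last `d` coordinates) with
`n ∈ L(e) ↔ (n,1,…,1) ∈ C(0,P)`, where `d` and `|P|` are linear in the number of
operators of `e`. -/
theorem intExpr_to_linear_set :
    ∃ c : ℕ, ∀ e : IntExpr, ∃ (d : ℕ) (P : Finset (Fin (d + 1) → ℕ)),
      (∀ p ∈ P, ∃ i : Fin (d + 1), i ≠ 0 ∧ p i = 1) ∧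
      (∀ n : ℕ, n ∈ e.lang ↔
        (fun i : Fin (d + 1) => if i = 0 then n else 1) ∈ LinSet 0 P) ∧
      d ≤ c * (e.ops + 1) ∧ P.card ≤ c * (e.ops + 1) := by
  refine ⟨3, fun e => ?_⟩
  obtain ⟨ι, _, P, hP, hι, hcard⟩ := e.exists_encodes
  obtain ⟨P', hcard', hP'one, hP'mem⟩ := hP.exists_finset_fin
  exact ⟨Fintype.card ι, P', hP'one, hP'mem, by omega, by omega⟩
end
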